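/- arXiv:1501.03838 — 3 statements merged into one kernel-verified Lean document; each statement's English description precedes it below -/
import Mathlib

section
/- Nontrivial regime of the abstain game: if 0 < α < 1/2 and α > (1/2)·(1 - nλ/∑_{i=1}^n |a_i|), then, with w = min{ i ∈ {1,…,n} : (1/n)·( ∑_{j=1}^i |a_j| + (1-2α)·∑_{j=i+1}^n |a_j| ) ≥ λ }, one has α·(1 - w/n) ≤ V_abst ≤ α·(1 - (w-1)/n). -/
open Finset

/-- Expected loss of the abstain game with abstention cost `α`,
abstain probabilities `p`, prediction `g`, and labels `z`. -/
noncomputable def Labst (n : ℕ) (α : ℝ) (p g z : ℕ → ℝ) : ℝ :=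
  (1 / (n : ℝ)) * ∑ i ∈ Icc 1 n,
    (p i * α + (1 / 2) * (1 - p i) * (1 - g i * z i))

/-- The value of the abstain game. -/
noncomputable def Vabst (n : ℕ) (a : ℕ → ℝ) (lam α : ℝ) : ℝ :=
  sInf {x : ℝ | ∃ p : ℕ → ℝ, (∀ i ∈ Icc 1 n, 0 ≤ p i ∧ p i ≤ 1) ∧
    ∃ g : ℕ → ℝ, (∀ i ∈ Icc 1 n, |g i| ≤ 1) ∧
      x = sSup {y : ℝ | ∃ z : ℕ → ℝ, (∀ i ∈ Icc 1 n, |z i| ≤ 1) ∧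
        lam ≤ (1 / (n : ℝ)) * ∑ i ∈ Icc 1 n, z i * a i ∧
        y = Labst n α p g z}}

private lemma icc_split {m n : ℕ} (h : m ≤ n) (f : ℕ → ℝ) :
    ∑ i ∈ Icc 1 n, f i = (∑ i ∈ Icc 1 m, f i) + ∑ i ∈ Icc (m + 1) n, f i := by
  have h1 : ∀ k : ℕ, Icc 1 k = Ioc 0 k := fun k => by
    ext x; simp [Finset.mem_Icc, Finset.mem_Ioc]; omega
  have h2 : Icc (m + 1) n = Ioc m n := by
    ext x; simp [Finset.mem_Icc, Finset.mem_Ioc]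
  rw [h1, h1, h2]
  exact (Finset.sum_Ioc_consecutive f (Nat.zero_le m) h).symm

private lemma gz_bounds {g z : ℝ} (hg : |g| ≤ 1) (hz : |z| ≤ 1) :
    -1 ≤ g * z ∧ g * z ≤ 1 := by
  constructor
  · have h := neg_abs_le (g * z)
    have : |g * z| ≤ 1 := by rw [abs_mul]; exact mul_le_one₀ hg (abs_nonneg _) hz
    linarith
  · calc g * z ≤ |g * z| := le_abs_self _
      _ ≤ 1 := by rw [abs_mul]; exact mul_le_one₀ hg (abs_nonneg _) hz

private lemma Labst_nonneg {n : ℕ} {α : ℝ} {p g z : ℕ → ℝ} (hα : 0 ≤ α)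
    (hp : ∀ i ∈ Icc 1 n, 0 ≤ p i ∧ p i ≤ 1)
    (hg : ∀ i ∈ Icc 1 n, |g i| ≤ 1) (hz : ∀ i ∈ Icc 1 n, |z i| ≤ 1) :
    0 ≤ Labst n α p g z := by
  unfold Labst
  apply mul_nonneg (by positivity)
  apply Finset.sum_nonneg
  intro i hi
  obtain ⟨h1, h2⟩ := hp i hi
  obtain ⟨h3, h4⟩ := gz_bounds (hg i hi) (hz i hi)
  nlinarith

private lemma Labst_le {n : ℕ} {α : ℝ} {p g z : ℕ → ℝ} (hn : 1 ≤ n) (hα : 0 ≤ α)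
    (hp : ∀ i ∈ Icc 1 n, 0 ≤ p i ∧ p i ≤ 1)
    (hg : ∀ i ∈ Icc 1 n, |g i| ≤ 1) (hz : ∀ i ∈ Icc 1 n, |z i| ≤ 1) :
    Labst n α p g z ≤ α + 1 := by
  unfold Labst
  have hn' : (0:ℝ) < n := by exact_mod_cast Nat.lt_of_lt_of_le Nat.zero_lt_one hn
  have hcard : (Icc 1 n).card = n := by rw [Nat.card_Icc]; omega
  have hsum : ∑ i ∈ Icc 1 n, (p i * α + 1 / 2 * (1 - p i) * (1 - g i * z i))
      ≤ ∑ _i ∈ Icc 1 n, (α + 1) := by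
    apply Finset.sum_le_sum
    intro i hi
    obtain ⟨h1, h2⟩ := hp i hi
    obtain ⟨h3, h4⟩ := gz_bounds (hg i hi) (hz i hi)
    nlinarith
  calc (1 / (n:ℝ)) * ∑ i ∈ Icc 1 n, (p i * α + 1 / 2 * (1 - p i) * (1 - g i * z i))
      ≤ (1 / (n:ℝ)) * ∑ _i ∈ Icc 1 n, (α + 1) := by
        apply mul_le_mul_of_nonneg_left hsum (by positivity)
    _ = α + 1 := by
        rw [Finset.sum_const, hcard, nsmul_eq_mul]
        field_simp

set_option maxHeartbeats 1000000 in
/-- nontrivial regime of the abstain game. -/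
theorem abstain_game_nontrivial_regime
    (n : ℕ) (hn : 1 ≤ n) (a : ℕ → ℝ)
    (hord : ∀ i j : ℕ, 1 ≤ i → i ≤ j → j ≤ n → |a j| ≤ |a i|)
    (lam : ℝ) (hlam_pos : 0 < lam)
    (hlam_le : lam ≤ (1 / (n : ℝ)) * ∑ i ∈ Icc 1 n, |a i|)
    (α : ℝ) (hα0 : 0 < α) (hαhalf : α < 1 / 2)
    (hαbig : (1 / 2) * (1 - (n : ℝ) * lam / ∑ i ∈ Icc 1 n, |a i|) < α)
    (w : ℕ) (hw1 : 1 ≤ w) (hwn : w ≤ n)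
    (hw_ge : lam ≤ (1 / (n : ℝ)) *
        ((∑ j ∈ Icc 1 w, |a j|) + (1 - 2 * α) * ∑ j ∈ Icc (w + 1) n, |a j|))
    (hw_min : ∀ i : ℕ, 1 ≤ i → i < w →
        (1 / (n : ℝ)) *
          ((∑ j ∈ Icc 1 i, |a j|) + (1 - 2 * α) * ∑ j ∈ Icc (i + 1) n, |a j|) < lam) :
    α * (1 - (w : ℝ) / n) ≤ Vabst n a lam α ∧
      Vabst n a lam α ≤ α * (1 - ((w : ℝ) - 1) / n) := by
  have hn' : (0:ℝ) < n := by exact_mod_cast Nat.lt_of_lt_of_le Nat.zero_lt_one hn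
  have hn0 : (n:ℝ) ≠ 0 := ne_of_gt hn'
  have hcard : (Icc 1 n).card = n := by rw [Nat.card_Icc]; omega
  have h2α : (0:ℝ) < 1 - 2 * α := by linarith
  -- clearing divisions
  have hclear : ∀ X : ℝ, lam ≤ (1 / (n:ℝ)) * X → (n:ℝ) * lam ≤ X := by
    intro X h
    have h2 := mul_le_mul_of_nonneg_left h (le_of_lt hn')
    calc (n:ℝ) * lam ≤ (n:ℝ) * ((1/(n:ℝ)) * X) := h2
      _ = X := by field_simp
  have hclear' : ∀ X : ℝ, (1 / (n:ℝ)) * X < lam → X < (n:ℝ) * lam := by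
    intro X h
    have h2 := mul_lt_mul_of_pos_left h hn'
    calc X = (n:ℝ) * ((1/(n:ℝ)) * X) := by field_simp
      _ < (n:ℝ) * lam := h2
  have hdiv : ∀ X : ℝ, (n:ℝ) * lam ≤ X → lam ≤ (1 / (n:ℝ)) * X := by
    intro X h
    have h2 := mul_le_mul_of_nonneg_left h (le_of_lt (by positivity : (0:ℝ) < 1/(n:ℝ)))
    calc lam = (1/(n:ℝ)) * ((n:ℝ) * lam) := by field_simp
      _ ≤ (1/(n:ℝ)) * X := h2
  have hnlamA : (n:ℝ) * lam ≤ ∑ i ∈ Icc 1 n, |a i| := hclear _ hlam_le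
  have hApos : (0:ℝ) < ∑ i ∈ Icc 1 n, |a i| := lt_of_lt_of_le (by positivity) hnlamA
  -- the sign function
  set s : ℕ → ℝ := fun i => if a i < 0 then -1 else 1 with hs_def
  have hs_mul : ∀ i, s i * a i = |a i| := by
    intro i
    by_cases h : a i < 0
    · simp only [hs_def, if_pos h, abs_of_neg h]; ring
    · simp only [hs_def, if_neg h, abs_of_nonneg (not_lt.mp h)]; ring
  have hs_abs : ∀ i, |s i| = 1 := by
    intro i
    by_cases h : a i < 0 <;> simp [hs_def, h]
  have hzae : ∀ (i : ℕ) (t : ℝ), t * a i = |a i| * (s i * t) := by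
    intro i t
    by_cases h : a i < 0
    · simp only [hs_def, if_pos h, abs_of_neg h]; ring
    · simp only [hs_def, if_neg h, abs_of_nonneg (not_lt.mp h)]; ring
  have hs_le : ∀ i ∈ Icc 1 n, |s i| ≤ 1 := fun i _ => le_of_eq (hs_abs i)
  have hs_feas : lam ≤ (1 / (n:ℝ)) * ∑ i ∈ Icc 1 n, s i * a i := by
    rw [Finset.sum_congr rfl (fun i _ => hs_mul i)]
    exact hlam_le
  -- key numeric facts
  have hww : w - 1 + 1 = w := Nat.succ_pred_eq_of_pos hw1
  have hwn1 : w - 1 ≤ n := le_trans (Nat.sub_le w 1) hwn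
  have hKge : (n:ℝ) * lam ≤
      (∑ j ∈ Icc 1 w, |a j|) + (1 - 2 * α) * ∑ j ∈ Icc (w + 1) n, |a j| :=
    hclear _ hw_ge
  have hK : (∑ j ∈ Icc 1 (w - 1), |a j|) + (1 - 2 * α) * ∑ j ∈ Icc w n, |a j|
      < (n:ℝ) * lam := by
    by_cases hw2 : w = 1
    · subst hw2
      have he : Icc 1 (1 - 1) = (∅ : Finset ℕ) := by simp
      rw [he, Finset.sum_empty]
      have h1 : 1 - (n:ℝ) * lam / (∑ i ∈ Icc 1 n, |a i|) < 2 * α := by linarith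
      have h2 : 1 - 2 * α < (n:ℝ) * lam / (∑ i ∈ Icc 1 n, |a i|) := by linarith
      have h3 := (lt_div_iff₀ hApos).mp h2
      simpa using by linarith [h3]
    · have hw2' : 1 ≤ w - 1 := by omega
      have := hw_min (w - 1) hw2' (by omega)
      rw [hww] at this
      exact hclear' _ this
  -- bddAbove of all inner sets
  have hbddY : ∀ p g : ℕ → ℝ, (∀ i ∈ Icc 1 n, 0 ≤ p i ∧ p i ≤ 1) →
      (∀ i ∈ Icc 1 n, |g i| ≤ 1) →
      BddAbove {y : ℝ | ∃ z : ℕ → ℝ, (∀ i ∈ Icc 1 n, |z i| ≤ 1) ∧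
        lam ≤ (1 / (n : ℝ)) * ∑ i ∈ Icc 1 n, z i * a i ∧
        y = Labst n α p g z} := by
    intro p g hp hg
    refine ⟨α + 1, ?_⟩
    rintro y ⟨z, hz1, _, rfl⟩
    exact Labst_le hn (le_of_lt hα0) hp hg hz1
  constructor
  · -- LOWER BOUND
    apply le_csInf
    · exact ⟨_, fun _ => 1, fun i _ => ⟨zero_le_one, le_refl 1⟩, fun _ => 0,
        fun i _ => by simp, rfl⟩
    rintro x ⟨p, hp, g, hg, rfl⟩
    set b : ℕ → ℝ := fun i => (1/2) * (1 - p i) * g i with hb_def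
    set z : ℕ → ℝ := fun i => if i ≤ w then s i
        else (if 0 ≤ b i * s i then (1 - 2*α) * s i else s i) with hz_def
    have hz1 : ∀ i ∈ Icc 1 n, |z i| ≤ 1 := by
      intro i _
      simp only [hz_def]
      by_cases h1 : i ≤ w
      · rw [if_pos h1]; exact le_of_eq (hs_abs i)
      · rw [if_neg h1]
        by_cases h2 : 0 ≤ b i * s i
        · rw [if_pos h2, abs_mul, hs_abs, mul_one, abs_of_pos h2α]; linarith
        · rw [if_neg h2]; exact le_of_eq (hs_abs i)
    have hz2 : lam ≤ (1 / (n : ℝ)) * ∑ i ∈ Icc 1 n, z i * a i := by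
      apply hdiv
      have hpt : ∀ i ∈ Icc 1 n,
          (if i ≤ w then |a i| else (1 - 2*α) * |a i|) ≤ z i * a i := by
        intro i hi
        simp only [hz_def]
        by_cases h1 : i ≤ w
        · rw [if_pos h1, if_pos h1, hs_mul]
        · rw [if_neg h1, if_neg h1]
          by_cases h2 : 0 ≤ b i * s i
          · rw [if_pos h2, mul_assoc, hs_mul]
          · rw [if_neg h2, hs_mul]
            nlinarith [abs_nonneg (a i)]
      have hsplit : ∑ i ∈ Icc 1 n, (if i ≤ w then |a i| else (1 - 2*α) * |a i|)
          = (∑ j ∈ Icc 1 w, |a j|) + (1 - 2*α) * ∑ j ∈ Icc (w + 1) n, |a j| := by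
        rw [icc_split hwn]
        congr 1
        · exact Finset.sum_congr rfl (fun i hi => if_pos (Finset.mem_Icc.mp hi).2)
        · rw [Finset.mul_sum]
          exact Finset.sum_congr rfl (fun i hi => if_neg (by
            have := (Finset.mem_Icc.mp hi).1; omega))
      calc (n:ℝ) * lam ≤ _ := hKge
        _ = _ := hsplit.symm
        _ ≤ ∑ i ∈ Icc 1 n, z i * a i := Finset.sum_le_sum hpt
    have hlow : α * (1 - (w:ℝ)/n) ≤ Labst n α p g z := by
      have hterm : ∀ i ∈ Icc 1 n, (α - if i ≤ w then α else 0)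
          ≤ p i * α + (1/2) * (1 - p i) * (1 - g i * z i) := by
        intro i hi
        obtain ⟨hp1, hp2⟩ := hp i hi
        obtain ⟨hgz1, hgz2⟩ := gz_bounds (hg i hi) (hz1 i hi)
        by_cases h1 : i ≤ w
        · rw [if_pos h1]
          have hpr := mul_nonneg (by linarith : (0:ℝ) ≤ 1 - p i)
            (by linarith : (0:ℝ) ≤ 1 - g i * z i)
          nlinarith [hpr]
        · rw [if_neg h1]
          have hzz : z i = if 0 ≤ b i * s i then (1 - 2*α) * s i else s i := by
            simp only [hz_def]; rw [if_neg h1]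
          have hgs : g i * s i ≤ 1 := (gz_bounds (hg i hi) (le_of_eq (hs_abs i))).2
          by_cases h2 : 0 ≤ b i * s i
          · rw [hzz, if_pos h2]
            have key : (1 - p i) * (g i * s i) ≤ (1 - p i) :=
              mul_le_of_le_one_right (by linarith) hgs
            have key2 : (1 - 2*α) * ((1 - p i) * (g i * s i)) ≤ (1 - 2*α) * (1 - p i) :=
              mul_le_mul_of_nonneg_left key (le_of_lt h2α)
            nlinarith [key2]
          · rw [hzz, if_neg h2]
            have h2' : (1/2) * (1 - p i) * g i * s i < 0 := by
              have h3 := lt_of_not_ge h2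
              simpa only [hb_def] using h3
            have hpr := mul_nonneg (by linarith : (0:ℝ) ≤ 1/2 - α)
              (by linarith : (0:ℝ) ≤ 1 - p i)
            nlinarith [h2', hpr]
      have hsum0 : ∑ i ∈ Icc 1 n, (α - if i ≤ w then α else 0)
          = (n:ℝ) * α - α * w := by
        rw [icc_split hwn]
        have e1 : ∑ i ∈ Icc 1 w, (α - if i ≤ w then α else 0) = 0 := by
          apply Finset.sum_eq_zero
          intro i hi
          rw [if_pos (Finset.mem_Icc.mp hi).2]; ring
        have e2 : ∑ i ∈ Icc (w+1) n, (α - if i ≤ w then α else 0)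
            = ((n - w : ℕ) : ℝ) * α := by
          have hcg : ∀ i ∈ Icc (w+1) n, (α - if i ≤ w then α else 0) = α := by
            intro i hi
            rw [if_neg (by have := (Finset.mem_Icc.mp hi).1; omega)]; ring
          rw [Finset.sum_congr rfl hcg, Finset.sum_const, nsmul_eq_mul, Nat.card_Icc]
          congr 2
          omega
        rw [e1, e2, Nat.cast_sub hwn]
        ring
      have hsum := Finset.sum_le_sum hterm
      rw [hsum0] at hsum
      unfold Labst
      have : α * (1 - (w:ℝ)/n) = (1/(n:ℝ)) * ((n:ℝ) * α - α * w) := by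
        field_simp
      rw [this]
      exact mul_le_mul_of_nonneg_left hsum (by positivity)
    calc α * (1 - (w:ℝ)/n) ≤ Labst n α p g z := hlow
      _ ≤ _ := le_csSup (hbddY p g hp hg) ⟨z, hz1, hz2, rfl⟩
  · -- UPPER BOUND
    -- the split index
    set k : ℕ := max (w - 1) 1 with hk_def
    have hk1 : 1 ≤ k := le_max_right _ _
    have hkn : k ≤ n := max_le (by omega) hn
    have hkhead : ∀ i, 1 ≤ i → i ≤ w - 1 → |a k| ≤ |a i| := by
      intro i h1 h2
      have hkw : k = w - 1 := by rw [hk_def]; omega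
      rw [hkw]
      exact hord i (w-1) h1 h2 hwn1
    have hktail : ∀ i, w ≤ i → i ≤ n → |a i| ≤ |a k| := by
      intro i h1 h2
      exact hord k i hk1 (by omega) h2
    have hMpos : 0 < |a k| := by
      rcases lt_or_eq_of_le (abs_nonneg (a k)) with h | h
      · exact h
      · exfalso
        have hTw : ∑ j ∈ Icc w n, |a j| = 0 := by
          apply Finset.sum_eq_zero
          intro i hi
          obtain ⟨hi1, hi2⟩ := Finset.mem_Icc.mp hi
          have := hktail i hi1 hi2
          have := abs_nonneg (a i)
          linarith
        have hAsplit : ∑ i ∈ Icc 1 n, |a i|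
            = (∑ j ∈ Icc 1 (w-1), |a j|) + ∑ j ∈ Icc w n, |a j| := by
          rw [icc_split hwn1, hww]
        rw [hTw] at hK hAsplit
        rw [hAsplit] at hnlamA
        linarith
    set μ : ℝ := 1 / (2 * |a k|) with hμ_def
    have hμpos : 0 < μ := by rw [hμ_def]; positivity
    have hμk : μ * |a k| = 1/2 := by
      rw [hμ_def]; field_simp
    have P1 : ∀ i, 1 ≤ i → i ≤ w - 1 → (1:ℝ)/2 ≤ μ * |a i| := by
      intro i h1 h2
      rw [← hμk]
      exact mul_le_mul_of_nonneg_left (hkhead i h1 h2) (le_of_lt hμpos)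
    have P2 : ∀ i, w ≤ i → i ≤ n → μ * |a i| ≤ 1/2 := by
      intro i h1 h2
      rw [← hμk]
      exact mul_le_mul_of_nonneg_left (hktail i h1 h2) (le_of_lt hμpos)
    set c : ℕ → ℝ := fun i => min (μ * |a i|) (1/2) with hc_def
    set p : ℕ → ℝ := fun i => 1 - 2 * c i with hp_def
    have hp : ∀ i ∈ Icc 1 n, 0 ≤ p i ∧ p i ≤ 1 := by
      intro i _
      have h1 : (0:ℝ) ≤ c i := le_min (by positivity) (by norm_num)
      have h2 : c i ≤ 1/2 := min_le_right _ _
      constructor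
      · simp only [hp_def]; linarith
      · simp only [hp_def]; linarith
    have hmemX : sSup {y : ℝ | ∃ z : ℕ → ℝ, (∀ i ∈ Icc 1 n, |z i| ≤ 1) ∧
        lam ≤ (1 / (n : ℝ)) * ∑ i ∈ Icc 1 n, z i * a i ∧
        y = Labst n α p s z} ∈ {x : ℝ | ∃ p' : ℕ → ℝ,
        (∀ i ∈ Icc 1 n, 0 ≤ p' i ∧ p' i ≤ 1) ∧
        ∃ g : ℕ → ℝ, (∀ i ∈ Icc 1 n, |g i| ≤ 1) ∧
          x = sSup {y : ℝ | ∃ z : ℕ → ℝ, (∀ i ∈ Icc 1 n, |z i| ≤ 1) ∧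
            lam ≤ (1 / (n : ℝ)) * ∑ i ∈ Icc 1 n, z i * a i ∧
            y = Labst n α p' g z}} := ⟨p, hp, s, hs_le, rfl⟩
    have hbddX : BddBelow {x : ℝ | ∃ p' : ℕ → ℝ,
        (∀ i ∈ Icc 1 n, 0 ≤ p' i ∧ p' i ≤ 1) ∧
        ∃ g : ℕ → ℝ, (∀ i ∈ Icc 1 n, |g i| ≤ 1) ∧
          x = sSup {y : ℝ | ∃ z : ℕ → ℝ, (∀ i ∈ Icc 1 n, |z i| ≤ 1) ∧
            lam ≤ (1 / (n : ℝ)) * ∑ i ∈ Icc 1 n, z i * a i ∧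
            y = Labst n α p' g z}} := by
      refine ⟨0, ?_⟩
      rintro x ⟨p', hp', g, hg, rfl⟩
      calc (0:ℝ) ≤ Labst n α p' g s := Labst_nonneg (le_of_lt hα0) hp' hg hs_le
        _ ≤ _ := le_csSup (hbddY p' g hp' hg) ⟨s, hs_le, hs_feas, rfl⟩
    have hsup_le : sSup {y : ℝ | ∃ z : ℕ → ℝ, (∀ i ∈ Icc 1 n, |z i| ≤ 1) ∧
        lam ≤ (1 / (n : ℝ)) * ∑ i ∈ Icc 1 n, z i * a i ∧
        y = Labst n α p s z} ≤ α * (1 - ((w:ℝ) - 1) / n) := by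
      refine csSup_le ⟨Labst n α p s s, ⟨s, hs_le, hs_feas, rfl⟩⟩ ?_
      rintro y ⟨z, hz1, hz2, rfl⟩
      have hzc : (n:ℝ) * lam ≤ ∑ i ∈ Icc 1 n, z i * a i := hclear _ hz2
      have hterm : ∀ i ∈ Icc 1 n, p i * α + (1/2) * (1 - p i) * (1 - s i * z i)
          ≤ α - 2 * α * c i + μ * |a i| - μ * (z i * a i) := by
        intro i hi
        have hc1 : c i ≤ μ * |a i| := min_le_left _ _
        have hsz : s i * z i ≤ 1 := (gz_bounds (hs_le i hi) (hz1 i hi)).2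
        have hza : z i * a i = |a i| * (s i * z i) := hzae i (z i)
        rw [hza]
        have key : c i * (1 - s i * z i) ≤ (μ * |a i|) * (1 - s i * z i) :=
          mul_le_mul_of_nonneg_right hc1 (by linarith)
        simp only [hp_def]
        nlinarith
      have hsum := Finset.sum_le_sum hterm
      have hC : ∑ i ∈ Icc 1 n, c i
          = ((w:ℝ) - 1) / 2 + μ * ∑ j ∈ Icc w n, |a j| := by
        rw [icc_split hwn1, hww]
        congr 1
        · rw [Finset.sum_congr rfl (fun i hi => by
            have h := Finset.mem_Icc.mp hi
            exact min_eq_right (P1 i h.1 h.2)), Finset.sum_const, nsmul_eq_mul,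
            Nat.card_Icc]
          have : (w - 1 + 1 - 1 : ℕ) = w - 1 := by omega
          rw [this, Nat.cast_sub hw1]
          push_cast
          ring
        · rw [Finset.mul_sum]
          exact Finset.sum_congr rfl (fun i hi => by
            have h := Finset.mem_Icc.mp hi
            exact min_eq_left (P2 i h.1 h.2))
      have hA : ∑ i ∈ Icc 1 n, |a i|
          = (∑ j ∈ Icc 1 (w-1), |a j|) + ∑ j ∈ Icc w n, |a j| := by
        rw [icc_split hwn1, hww]
      have hrhs : ∑ i ∈ Icc 1 n, (α - 2 * α * c i + μ * |a i| - μ * (z i * a i))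
          = (n:ℝ) * α - 2 * α * ∑ i ∈ Icc 1 n, c i
            + μ * ∑ i ∈ Icc 1 n, |a i| - μ * ∑ i ∈ Icc 1 n, (z i * a i) := by
        rw [Finset.sum_sub_distrib, Finset.sum_add_distrib, Finset.sum_sub_distrib,
          Finset.sum_const, ← Finset.mul_sum, ← Finset.mul_sum, ← Finset.mul_sum,
          hcard, nsmul_eq_mul]
      rw [hrhs, hC, hA] at hsum
      have hfinal : ∑ i ∈ Icc 1 n, (p i * α + 1/2 * (1 - p i) * (1 - s i * z i))
          ≤ (n:ℝ) * α - α * ((w:ℝ) - 1) := by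
        have hb : μ * ((∑ j ∈ Icc 1 (w-1), |a j|)
            + (1 - 2*α) * ∑ j ∈ Icc w n, |a j| - (n:ℝ) * lam) ≤ 0 := by
          apply mul_nonpos_of_nonneg_of_nonpos (le_of_lt hμpos)
          linarith
        have hμz : μ * ((n:ℝ) * lam) ≤ μ * ∑ i ∈ Icc 1 n, (z i * a i) :=
          mul_le_mul_of_nonneg_left hzc (le_of_lt hμpos)
        nlinarith [hsum, hμz, hb]
      unfold Labst
      have heq : α * (1 - ((w:ℝ) - 1)/n) = (1/(n:ℝ)) * ((n:ℝ) * α - α * ((w:ℝ) - 1)) := by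
        field_simp
      rw [heq]
      exact mul_le_mul_of_nonneg_left hfinal (by positivity)
    exact le_trans (csInf_le hbddX hmemX) hsup_le
end

section
/- Value of the inner game with abstention weights: let p ∈ [0,1)^n be such that |a_1|/(1-p_1) ≥ |a_2|/(1-p_2) ≥ … ≥ |a_n|/(1-p_n), and let v₂ = min{i ∈ {1,…,n} : (1/n)·∑_{j=1}^i |a_j| ≥ λ} (so |a_{v₂}| > 0). Then sup_{g ∈ [-1,1]^n} inf_{z ∈ Z} (1/n)·∑_{i=1}^n z_i·(1-p_i)·g_i = (1/n)·∑_{i=1}^{v₂-1} (1-p_i) + ((1-p_{v₂})/|a_{v₂}|)·( λ - (1/n)·∑_{i=1}^{v₂-1} |a_i| ). -/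
open Finset

/-- value of the inner game with abstention weights. -/
theorem inner_abstain_game_value
    (n : ℕ) (hn : 1 ≤ n) (a : ℕ → ℝ)
    (lam : ℝ) (hlam_pos : 0 < lam)
    (hlam_le : lam ≤ (1 / (n : ℝ)) * ∑ i ∈ Icc 1 n, |a i|)
    (p : ℕ → ℝ) (hp : ∀ i ∈ Icc 1 n, 0 ≤ p i ∧ p i < 1)
    (hord : ∀ i j : ℕ, 1 ≤ i → i ≤ j → j ≤ n →
        |a j| / (1 - p j) ≤ |a i| / (1 - p i))
    (v₂ : ℕ) (hv1 : 1 ≤ v₂) (hvn : v₂ ≤ n)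
    (hv_ge : lam ≤ (1 / (n : ℝ)) * ∑ j ∈ Icc 1 v₂, |a j|)
    (hv_min : ∀ i : ℕ, 1 ≤ i → i < v₂ → (1 / (n : ℝ)) * ∑ j ∈ Icc 1 i, |a j| < lam) :
    sSup {x : ℝ | ∃ g : ℕ → ℝ, (∀ i ∈ Icc 1 n, |g i| ≤ 1) ∧
        x = sInf {y : ℝ | ∃ z : ℕ → ℝ, (∀ i ∈ Icc 1 n, |z i| ≤ 1) ∧
            lam ≤ (1 / (n : ℝ)) * ∑ i ∈ Icc 1 n, z i * a i ∧
            y = (1 / (n : ℝ)) * ∑ i ∈ Icc 1 n, z i * (1 - p i) * g i}} =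
      (1 / (n : ℝ)) * (∑ i ∈ Icc 1 (v₂ - 1), (1 - p i)) +
        ((1 - p v₂) / |a v₂|) *
          (lam - (1 / (n : ℝ)) * ∑ i ∈ Icc 1 (v₂ - 1), |a i|) := by
  have hN : (0:ℝ) < (n:ℝ) := by exact_mod_cast Nat.lt_of_lt_of_le Nat.zero_lt_one hn
  have h1p : ∀ i, 1 ≤ i → i ≤ n → 0 < 1 - p i := by
    intro i h1 h2
    have := (hp i (mem_Icc.mpr ⟨h1, h2⟩)).2
    linarith
  have hp0 : ∀ i, 1 ≤ i → i ≤ n → 0 ≤ p i := fun i h1 h2 =>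
    (hp i (mem_Icc.mpr ⟨h1, h2⟩)).1
  have hpv : 0 < 1 - p v₂ := h1p v₂ hv1 hvn
  set A := ∑ i ∈ Icc 1 (v₂ - 1), |a i| with hAdef
  set P := ∑ i ∈ Icc 1 (v₂ - 1), (1 - p i) with hPdef
  have hv₂ : v₂ - 1 + 1 = v₂ := by omega
  have hstep : ∀ f : ℕ → ℝ, ∑ i ∈ Icc 1 v₂, f i
      = (∑ i ∈ Icc 1 (v₂ - 1), f i) + f v₂ := by
    intro f
    have h := Finset.sum_Icc_succ_top (a := 1) (b := v₂ - 1) (by omega) f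
    rw [hv₂] at h
    exact h
  have hsplitA : ∑ i ∈ Icc 1 v₂, |a i| = A + |a v₂| := hstep fun i => |a i|
  have hlt : (1 / (n:ℝ)) * A < lam := by
    rcases eq_or_lt_of_le hv1 with h | h
    · have h0 : Icc 1 (v₂ - 1) = (∅ : Finset ℕ) := Finset.Icc_eq_empty (by omega)
      rw [hAdef, h0, Finset.sum_empty, mul_zero]
      exact hlam_pos
    · exact hv_min (v₂ - 1) (by omega) (by omega)
  have hA_lt : A < (n:ℝ) * lam := by
    have h := mul_lt_mul_of_pos_left hlt hN
    rwa [← mul_assoc, mul_one_div_cancel (ne_of_gt hN), one_mul] at h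
  have hA_le : (n:ℝ) * lam ≤ A + |a v₂| := by
    have h := hv_ge
    rw [hsplitA] at h
    have h2 := mul_le_mul_of_nonneg_left h hN.le
    rwa [← mul_assoc, mul_one_div_cancel (ne_of_gt hN), one_mul] at h2
  have hav : 0 < |a v₂| := by linarith
  set c := (1 - p v₂) / |a v₂| with hcdef
  have hc : 0 < c := div_pos hpv hav
  have hcv : c * |a v₂| = 1 - p v₂ := div_mul_cancel₀ _ (ne_of_gt hav)
  have hai : ∀ i, 1 ≤ i → i ≤ v₂ → 0 < |a i| := by
    intro i h1 h2
    have h1pi := h1p i h1 (le_trans h2 hvn)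
    have hq : 0 < |a i| / (1 - p i) :=
      lt_of_lt_of_le (div_pos hav hpv) (hord i v₂ h1 h2 hvn)
    have := mul_pos hq h1pi
    rwa [div_mul_cancel₀ _ (ne_of_gt h1pi)] at this
  have hcia : ∀ i, 1 ≤ i → i ≤ v₂ → 1 - p i ≤ c * |a i| := by
    intro i h1 h2
    have h1pi := h1p i h1 (le_trans h2 hvn)
    have h := (div_le_div_iff₀ hpv h1pi).mp (hord i v₂ h1 h2 hvn)
    rw [hcdef, div_mul_eq_mul_div, le_div_iff₀ hav]
    linarith
  set θ := ((n:ℝ) * lam - A) / |a v₂| with hθdef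
  have hθ0 : 0 ≤ θ := div_nonneg (by linarith) hav.le
  have hθ1 : θ ≤ 1 := by
    rw [hθdef, div_le_one hav]
    linarith
  have hθa : θ * |a v₂| = (n:ℝ) * lam - A := div_mul_cancel₀ _ (ne_of_gt hav)
  -- sign helper
  have hsgn : ∀ i, 0 < |a i| → abs (a i / |a i|) = 1 := by
    intro i h
    rw [abs_div, abs_abs, div_self (ne_of_gt h)]
  have hsgn_mul : ∀ i, 0 < |a i| → a i / |a i| * a i = |a i| := by
    intro i h
    rw [div_mul_eq_mul_div, ← sq, ← sq_abs, sq, mul_div_assoc,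
      div_self (ne_of_gt h), mul_one]
  -- the optimal strategies
  set g : ℕ → ℝ := fun i => if i ≤ v₂ then a i / |a i| else c * (a i / (1 - p i))
    with hgdef
  set z₀ : ℕ → ℝ := fun i =>
    if i ≤ v₂ - 1 then a i / |a i| else if i = v₂ then θ * (a v₂ / |a v₂|) else 0
    with hz₀def
  set V : ℝ := (1 / (n:ℝ)) * P + c * (lam - (1 / (n:ℝ)) * A) with hVdef
  have hg_bd : ∀ i ∈ Icc 1 n, |g i| ≤ 1 := by
    intro i hi
    rw [mem_Icc] at hi
    simp only [hgdef]
    by_cases h : i ≤ v₂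
    · rw [if_pos h, hsgn i (hai i hi.1 h)]
    · rw [if_neg h]
      have h1pi := h1p i hi.1 hi.2
      have hO := hord v₂ i hv1 (by omega) hi.2
      rw [abs_mul, abs_of_pos hc, abs_div, abs_of_pos h1pi]
      calc c * (|a i| / (1 - p i)) ≤ c * (|a v₂| / (1 - p v₂)) :=
            mul_le_mul_of_nonneg_left hO hc.le
        _ = 1 := by rw [hcdef]; field_simp
  have hz₀_bd : ∀ i ∈ Icc 1 n, |z₀ i| ≤ 1 := by
    intro i hi
    rw [mem_Icc] at hi
    simp only [hz₀def]
    by_cases h : i ≤ v₂ - 1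
    · rw [if_pos h, hsgn i (hai i hi.1 (by omega))]
    · rw [if_neg h]
      by_cases h2 : i = v₂
      · rw [if_pos h2, abs_mul, abs_of_nonneg hθ0, hsgn v₂ hav, mul_one]
        exact hθ1
      · rw [if_neg h2]; simp
  have hz₀_sum : ∑ i ∈ Icc 1 n, z₀ i * a i = (n:ℝ) * lam := by
    have hsub : ∑ i ∈ Icc 1 n, z₀ i * a i = ∑ i ∈ Icc 1 v₂, z₀ i * a i := by
      symm
      apply Finset.sum_subset (Finset.Icc_subset_Icc_right hvn)
      intro i hi hni
      rw [mem_Icc] at hi hni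
      have h1 : ¬ i ≤ v₂ - 1 := by omega
      have h2 : i ≠ v₂ := by omega
      simp only [hz₀def, if_neg h1, if_neg h2, zero_mul]
    rw [hsub, hstep fun i => z₀ i * a i]
    have h1 : ∑ i ∈ Icc 1 (v₂ - 1), z₀ i * a i = A := by
      rw [hAdef]
      apply Finset.sum_congr rfl
      intro i hi
      rw [mem_Icc] at hi
      simp only [hz₀def, if_pos hi.2]
      exact hsgn_mul i (hai i hi.1 (by omega))
    have h2 : z₀ v₂ * a v₂ = θ * |a v₂| := by
      have hne : ¬ v₂ ≤ v₂ - 1 := by omega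
      simp only [hz₀def, if_neg hne, if_pos rfl, if_true]
      rw [mul_assoc, hsgn_mul v₂ hav]
    rw [h1, h2, hθa]
    ring
  have hz₀_feas : lam ≤ (1 / (n:ℝ)) * ∑ i ∈ Icc 1 n, z₀ i * a i := by
    rw [hz₀_sum, one_div, inv_mul_cancel_left₀ (ne_of_gt hN)]
  -- upper bound: payoff of z₀ against any g' is at most V
  have hupper : ∀ g' : ℕ → ℝ, (∀ i ∈ Icc 1 n, |g' i| ≤ 1) →
      (1 / (n:ℝ)) * ∑ i ∈ Icc 1 n, z₀ i * (1 - p i) * g' i ≤ V := by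
    intro g' hg'
    have hterm : ∀ i ∈ Icc 1 n, z₀ i * (1 - p i) * g' i ≤
        (if i ≤ v₂ - 1 then (1 - p i) else if i = v₂ then θ * (1 - p v₂) else 0) := by
      intro i hi
      have hmem := hi
      rw [mem_Icc] at hi
      have h1pi := h1p i hi.1 hi.2
      refine le_trans (le_abs_self _) ?_
      rw [abs_mul, abs_mul]
      by_cases h : i ≤ v₂ - 1
      · rw [if_pos h]
        simp only [hz₀def, if_pos h]
        rw [hsgn i (hai i hi.1 (by omega)), one_mul, abs_of_pos h1pi]
        calc (1 - p i) * |g' i| ≤ (1 - p i) * 1 :=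
              mul_le_mul_of_nonneg_left (hg' i hmem) h1pi.le
          _ = 1 - p i := mul_one _
      · rw [if_neg h]
        by_cases h2 : i = v₂
        · subst h2
          rw [if_pos rfl]
          simp only [hz₀def, if_neg h, if_pos rfl, if_true]
          rw [abs_mul, abs_of_nonneg hθ0, hsgn i hav, mul_one, abs_of_pos hpv]
          calc θ * (1 - p i) * |g' i| ≤ θ * (1 - p i) * 1 :=
                mul_le_mul_of_nonneg_left (hg' i hmem) (by positivity)
            _ = θ * (1 - p i) := mul_one _
        · rw [if_neg h2]
          simp only [hz₀def, if_neg h, if_neg h2]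
          simp
    have hsum := Finset.sum_le_sum hterm
    have hrhs : ∑ i ∈ Icc 1 n,
        (if i ≤ v₂ - 1 then (1 - p i) else if i = v₂ then θ * (1 - p v₂) else 0)
        = P + θ * (1 - p v₂) := by
      have hsub : ∑ i ∈ Icc 1 n,
          (if i ≤ v₂ - 1 then (1 - p i) else if i = v₂ then θ * (1 - p v₂) else 0)
          = ∑ i ∈ Icc 1 v₂,
          (if i ≤ v₂ - 1 then (1 - p i) else if i = v₂ then θ * (1 - p v₂) else 0) := by
        symm
        apply Finset.sum_subset (Finset.Icc_subset_Icc_right hvn)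
        intro i hi hni
        rw [mem_Icc] at hi hni
        have h1 : ¬ i ≤ v₂ - 1 := by omega
        have h2 : i ≠ v₂ := by omega
        rw [if_neg h1, if_neg h2]
      rw [hsub, hstep]
      congr 1
      · rw [hPdef]
        apply Finset.sum_congr rfl
        intro i hi
        rw [mem_Icc] at hi
        rw [if_pos hi.2]
      · have h1 : ¬ v₂ ≤ v₂ - 1 := by omega
        rw [if_neg h1, if_pos rfl]
    have hfin : (1 / (n:ℝ)) * (P + θ * (1 - p v₂)) = V := by
      have h1 : |a v₂| ≠ 0 := ne_of_gt hav
      have h2 : (n:ℝ) ≠ 0 := ne_of_gt hN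
      rw [hVdef, hθdef, hcdef]
      field_simp
    calc (1 / (n:ℝ)) * ∑ i ∈ Icc 1 n, z₀ i * (1 - p i) * g' i
        ≤ (1 / (n:ℝ)) * (P + θ * (1 - p v₂)) := by
          apply mul_le_mul_of_nonneg_left _ (by positivity)
          rw [← hrhs]; exact hsum
      _ = V := hfin
  -- lower bound: payoff of any feasible z against g is at least V
  have hlower : ∀ z : ℕ → ℝ, (∀ i ∈ Icc 1 n, |z i| ≤ 1) →
      lam ≤ (1 / (n:ℝ)) * ∑ i ∈ Icc 1 n, z i * a i →
      V ≤ (1 / (n:ℝ)) * ∑ i ∈ Icc 1 n, z i * (1 - p i) * g i := by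
    intro z hz hfeas
    have hterm : ∀ i ∈ Icc 1 n,
        c * (z i * a i) + (if i ≤ v₂ then (1 - p i) - c * |a i| else 0)
          ≤ z i * (1 - p i) * g i := by
      intro i hi
      have hmem := hi
      rw [mem_Icc] at hi
      have h1pi := h1p i hi.1 hi.2
      by_cases h : i ≤ v₂
      · have haipos := hai i hi.1 h
        rw [if_pos h]
        simp only [hgdef, if_pos h]
        set w := z i * a i / |a i| with hwdef
        have hw1 : w ≤ 1 := by
          refine le_trans (le_abs_self w) ?_
          rw [hwdef, abs_div, abs_mul, abs_abs, mul_div_assoc,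
            div_self (ne_of_gt haipos), mul_one]
          exact hz i hmem
        have hwa : w * |a i| = z i * a i := div_mul_cancel₀ _ (ne_of_gt haipos)
        have hrw : z i * (1 - p i) * (a i / |a i|) = w * (1 - p i) := by
          rw [hwdef]; ring
        rw [hrw, ← hwa]
        have hci := hcia i hi.1 h
        nlinarith [mul_le_mul_of_nonneg_left hci (sub_nonneg.mpr hw1)]
      · rw [if_neg h]
        simp only [hgdef, if_neg h]
        have heq : z i * (1 - p i) * (c * (a i / (1 - p i))) = c * (z i * a i) := by
          field_simp
        rw [heq]
        simp
    have hsum := Finset.sum_le_sum hterm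
    rw [Finset.sum_add_distrib] at hsum
    have hψsum : ∑ i ∈ Icc 1 n, (if i ≤ v₂ then (1 - p i) - c * |a i| else 0)
        = P - c * A := by
      have hsub : ∑ i ∈ Icc 1 n, (if i ≤ v₂ then (1 - p i) - c * |a i| else 0)
          = ∑ i ∈ Icc 1 v₂, (if i ≤ v₂ then (1 - p i) - c * |a i| else 0) := by
        symm
        apply Finset.sum_subset (Finset.Icc_subset_Icc_right hvn)
        intro i hi hni
        rw [mem_Icc] at hi hni
        rw [if_neg (by omega : ¬ i ≤ v₂)]
      rw [hsub]
      have hcong : ∑ i ∈ Icc 1 v₂, (if i ≤ v₂ then (1 - p i) - c * |a i| else 0)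
          = ∑ i ∈ Icc 1 v₂, ((1 - p i) - c * |a i|) := by
        apply Finset.sum_congr rfl
        intro i hi
        rw [mem_Icc] at hi
        rw [if_pos hi.2]
      rw [hcong, hstep fun i => (1 - p i) - c * |a i|,
        Finset.sum_sub_distrib, ← Finset.mul_sum, ← hPdef, ← hAdef, hcv]
      ring
    have hmul : ∑ i ∈ Icc 1 n, c * (z i * a i) = c * ∑ i ∈ Icc 1 n, z i * a i :=
      (Finset.mul_sum _ _ _).symm
    rw [hmul, hψsum] at hsum
    have hfeas' : (n:ℝ) * lam ≤ ∑ i ∈ Icc 1 n, z i * a i := by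
      have h := mul_le_mul_of_nonneg_left hfeas hN.le
      rwa [one_div, mul_inv_cancel_left₀ (ne_of_gt hN)] at h
    have h1 : c * ((n:ℝ) * lam) + (P - c * A) ≤
        ∑ i ∈ Icc 1 n, z i * (1 - p i) * g i := by
      have := mul_le_mul_of_nonneg_left hfeas' hc.le
      linarith
    have hVeq : V = (1 / (n:ℝ)) * (c * ((n:ℝ) * lam) + (P - c * A)) := by
      have h2 : (n:ℝ) ≠ 0 := ne_of_gt hN
      rw [hVdef]
      field_simp
      ring
    rw [hVeq]
    exact mul_le_mul_of_nonneg_left h1 (by positivity)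
  -- nonemptiness and boundedness of the inner sets
  have hTmem : ∀ g' : ℕ → ℝ,
      (1 / (n:ℝ)) * ∑ i ∈ Icc 1 n, z₀ i * (1 - p i) * g' i ∈
      {y : ℝ | ∃ z : ℕ → ℝ, (∀ i ∈ Icc 1 n, |z i| ≤ 1) ∧
          lam ≤ (1 / (n:ℝ)) * ∑ i ∈ Icc 1 n, z i * a i ∧
          y = (1 / (n:ℝ)) * ∑ i ∈ Icc 1 n, z i * (1 - p i) * g' i} := by
    intro g'
    exact ⟨z₀, hz₀_bd, hz₀_feas, rfl⟩
  have hTbdd : ∀ g' : ℕ → ℝ, (∀ i ∈ Icc 1 n, |g' i| ≤ 1) →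
      BddBelow {y : ℝ | ∃ z : ℕ → ℝ, (∀ i ∈ Icc 1 n, |z i| ≤ 1) ∧
          lam ≤ (1 / (n:ℝ)) * ∑ i ∈ Icc 1 n, z i * a i ∧
          y = (1 / (n:ℝ)) * ∑ i ∈ Icc 1 n, z i * (1 - p i) * g' i} := by
    intro g' hg'
    refine ⟨-1, ?_⟩
    rintro y ⟨z, hzb, -, rfl⟩
    have hterm : ∀ i ∈ Icc 1 n, (-1 : ℝ) ≤ z i * (1 - p i) * g' i := by
      intro i hi
      have hmem := hi
      rw [mem_Icc] at hi
      have h1pi := h1p i hi.1 hi.2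
      have hple := hp0 i hi.1 hi.2
      have habs : |z i * (1 - p i) * g' i| ≤ 1 := by
        rw [abs_mul, abs_mul, abs_of_pos h1pi]
        calc |z i| * (1 - p i) * |g' i| ≤ 1 * 1 * 1 := by
              apply mul_le_mul _ (hg' i hmem) (abs_nonneg _) (by norm_num)
              apply mul_le_mul (hzb i hmem) (by linarith) (by linarith) (by norm_num)
          _ = 1 := by norm_num
      linarith [neg_abs_le (z i * (1 - p i) * g' i)]
    have hsum := Finset.sum_le_sum hterm
    rw [Finset.sum_const, Nat.card_Icc] at hsum
    simp only [Nat.add_sub_cancel, nsmul_eq_mul] at hsum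
    have h2 : (-(n:ℝ)) ≤ ∑ i ∈ Icc 1 n, z i * (1 - p i) * g' i := by
      calc (-(n:ℝ)) = (n:ℝ) * (-1) := by ring
        _ ≤ _ := hsum
    have h3 := mul_le_mul_of_nonneg_left h2
      (le_of_lt (by positivity : (0:ℝ) < 1/(n:ℝ)))
    calc (-1 : ℝ) = (1/(n:ℝ)) * (-(n:ℝ)) := by field_simp
      _ ≤ _ := h3
  have hub : ∀ x ∈ {x : ℝ | ∃ g' : ℕ → ℝ, (∀ i ∈ Icc 1 n, |g' i| ≤ 1) ∧
      x = sInf {y : ℝ | ∃ z : ℕ → ℝ, (∀ i ∈ Icc 1 n, |z i| ≤ 1) ∧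
          lam ≤ (1 / (n:ℝ)) * ∑ i ∈ Icc 1 n, z i * a i ∧
          y = (1 / (n:ℝ)) * ∑ i ∈ Icc 1 n, z i * (1 - p i) * g' i}}, x ≤ V := by
    rintro x ⟨g', hg', rfl⟩
    calc sInf {y : ℝ | ∃ z : ℕ → ℝ, (∀ i ∈ Icc 1 n, |z i| ≤ 1) ∧
          lam ≤ (1 / (n:ℝ)) * ∑ i ∈ Icc 1 n, z i * a i ∧
          y = (1 / (n:ℝ)) * ∑ i ∈ Icc 1 n, z i * (1 - p i) * g' i}
        ≤ (1 / (n:ℝ)) * ∑ i ∈ Icc 1 n, z₀ i * (1 - p i) * g' i :=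
          csInf_le (hTbdd g' hg') (hTmem g')
      _ ≤ V := hupper g' hg'
  have hVmem : V ∈ {x : ℝ | ∃ g' : ℕ → ℝ, (∀ i ∈ Icc 1 n, |g' i| ≤ 1) ∧
      x = sInf {y : ℝ | ∃ z : ℕ → ℝ, (∀ i ∈ Icc 1 n, |z i| ≤ 1) ∧
          lam ≤ (1 / (n:ℝ)) * ∑ i ∈ Icc 1 n, z i * a i ∧
          y = (1 / (n:ℝ)) * ∑ i ∈ Icc 1 n, z i * (1 - p i) * g' i}} := by
    refine ⟨g, hg_bd, ?_⟩
    apply le_antisymm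
    · apply le_csInf ⟨_, hTmem g⟩
      rintro y ⟨z, hzb, hzf, rfl⟩
      exact hlower z hzb hzf
    · calc sInf {y : ℝ | ∃ z : ℕ → ℝ, (∀ i ∈ Icc 1 n, |z i| ≤ 1) ∧
          lam ≤ (1 / (n:ℝ)) * ∑ i ∈ Icc 1 n, z i * a i ∧
          y = (1 / (n:ℝ)) * ∑ i ∈ Icc 1 n, z i * (1 - p i) * g i}
          ≤ (1 / (n:ℝ)) * ∑ i ∈ Icc 1 n, z₀ i * (1 - p i) * g i :=
            csInf_le (hTbdd g hg_bd) (hTmem g)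
        _ ≤ V := hupper g hg_bd
  exact le_antisymm (csSup_le ⟨V, hVmem⟩ hub) (le_csSup ⟨V, hub⟩ hVmem)
end

section
/- Near-optimal strategy for α ≥ 1/2: if the predictor never abstains and plays g*, its worst-case loss equals sup_{z ∈ Z} L(0, g*, z) = (1/2)·(1 - V), and this quantity is at most (1/2)·(1 - (v-1)/n). -/
open Finset

/-- The minimax optimal predictor strategy. -/
noncomputable def gstar (a : ℕ → ℝ) (v : ℕ) : ℕ → ℝ :=
  fun i => if i ≤ v then Real.sign (a i) else a i / |a v|

private lemma sign_mul_self' (x : ℝ) : Real.sign x * x = |x| := by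
  rcases lt_trichotomy x 0 with h|h|h
  · rw [Real.sign_of_neg h, abs_of_neg h]; ring
  · simp [h]
  · rw [Real.sign_of_pos h, abs_of_pos h]; ring

private lemma sign_sq' (x : ℝ) (hx : x ≠ 0) : Real.sign x * Real.sign x = 1 := by
  rcases hx.lt_or_gt with h|h
  · rw [Real.sign_of_neg h]; ring
  · rw [Real.sign_of_pos h]; ring

private lemma abs_sign_le' (x : ℝ) : |Real.sign x| ≤ 1 := by
  rcases lt_trichotomy x 0 with h|h|h
  · rw [Real.sign_of_neg h]; norm_num
  · simp [h]
  · rw [Real.sign_of_pos h]; norm_num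

private lemma mul_sign_abs' (x z : ℝ) : z * x = (Real.sign x * z) * |x| := by
  rcases lt_trichotomy x 0 with h|h|h
  · rw [Real.sign_of_neg h, abs_of_neg h]; ring
  · simp [h]
  · rw [Real.sign_of_pos h, abs_of_pos h]; ring

private lemma pointwise' (x z c : ℝ) (hc : 0 < c) (hcx : c ≤ |x|) (hz : |z| ≤ 1) :
    1 - |x| / c ≤ Real.sign x * z - z * x / c := by
  have h1 : Real.sign x * z - z * x / c = (Real.sign x * z) * (1 - |x| / c) := by
    rw [mul_sign_abs' x z]; field_simp
  have hfac : 1 - |x| / c ≤ 0 := by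
    rw [sub_nonpos, le_div_iff₀ hc]; linarith
  have hsz : Real.sign x * z ≤ 1 := by
    calc Real.sign x * z ≤ |Real.sign x * z| := le_abs_self _
    _ = |Real.sign x| * |z| := abs_mul _ _
    _ ≤ 1 * 1 := mul_le_mul (abs_sign_le' x) hz (abs_nonneg _) zero_le_one
    _ = 1 := by ring
  rw [h1]
  nlinarith [mul_le_mul_of_nonpos_right hsz hfac]

private lemma Labst_zero' (n : ℕ) (hn : 1 ≤ n) (α : ℝ) (g z : ℕ → ℝ) :
    Labst n α (fun _ => 0) g z
      = (1 / 2) * (1 - (1 / (n : ℝ)) * ∑ i ∈ Icc 1 n, g i * z i) := by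
  have hn0 : (n : ℝ) ≠ 0 := Nat.cast_ne_zero.mpr (by omega)
  unfold Labst
  have h : ∑ i ∈ Icc 1 n,
      ((fun _ => (0:ℝ)) i * α + (1 / 2) * (1 - (fun _ => (0:ℝ)) i) * (1 - g i * z i))
      = (n : ℝ) * (1 / 2) - (1 / 2) * ∑ i ∈ Icc 1 n, g i * z i := by
    rw [Finset.mul_sum]
    have hc : ∑ _i ∈ Icc 1 n, ((1:ℝ)/2) = (n : ℝ) * (1/2) := by
      rw [Finset.sum_const, Nat.card_Icc]
      have : n + 1 - 1 = n := by omega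
      rw [this]
      simp [nsmul_eq_mul]
    rw [← hc, ← Finset.sum_sub_distrib]
    apply Finset.sum_congr rfl
    intro i _
    ring
  rw [h, mul_sub, show (1/(n:ℝ)) * ((n:ℝ)*(1/2)) = 1/2 by field_simp]
  ring

/-- near-optimal strategy for α ≥ 1/2: never abstaining and playing g*
has worst-case loss (1/2)(1 - V), which is at most (1/2)(1 - (v-1)/n). -/
theorem never_abstain_gstar_loss
    (n : ℕ) (hn : 1 ≤ n) (a : ℕ → ℝ)
    (hord : ∀ i j : ℕ, 1 ≤ i → i ≤ j → j ≤ n → |a j| ≤ |a i|)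
    (lam : ℝ) (hlam_pos : 0 < lam)
    (hlam_le : lam ≤ (1 / (n : ℝ)) * ∑ i ∈ Icc 1 n, |a i|)
    (v : ℕ) (hv1 : 1 ≤ v) (hvn : v ≤ n)
    (hv_ge : lam ≤ (1 / (n : ℝ)) * ∑ j ∈ Icc 1 v, |a j|)
    (hv_min : ∀ i : ℕ, 1 ≤ i → i < v → (1 / (n : ℝ)) * ∑ j ∈ Icc 1 i, |a j| < lam)
    (V : ℝ)
    (hV : V = ((v : ℝ) - 1) / n +
        (lam - (1 / (n : ℝ)) * ∑ i ∈ Icc 1 (v - 1), |a i|) / |a v|)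
    (α : ℝ) (hα : 1 / 2 ≤ α) :
    sSup {y : ℝ | ∃ z : ℕ → ℝ, (∀ i ∈ Icc 1 n, |z i| ≤ 1) ∧
        lam ≤ (1 / (n : ℝ)) * ∑ i ∈ Icc 1 n, z i * a i ∧
        y = Labst n α (fun _ => 0) (gstar a v) z} = (1 / 2) * (1 - V) ∧
    (1 / 2) * (1 - V) ≤ (1 / 2) * (1 - ((v : ℝ) - 1) / n) := by
  have hn0 : (0:ℝ) < (n : ℝ) := by exact_mod_cast Nat.pos_of_ne_zero (by omega)
  have hnne : (n : ℝ) ≠ 0 := ne_of_gt hn0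
  set B : ℝ := ∑ i ∈ Icc 1 (v - 1), |a i| with hB
  have hvsucc : v = (v - 1) + 1 := by omega
  have hsplitv : ∑ i ∈ Icc 1 v, |a i| = B + |a v| := by
    rw [hB]
    conv_lhs => rw [hvsucc]
    rw [Finset.sum_Icc_succ_top (by omega)]
    rw [← hvsucc]
  have hBlt : B < (n : ℝ) * lam := by
    rcases eq_or_lt_of_le hv1 with h1 | h2
    · have hv0 : v - 1 = 0 := by omega
      have : B = 0 := by rw [hB, hv0]; simp
      rw [this]
      positivity
    · have h := hv_min (v - 1) (by omega) (by omega)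
      rw [← hB, div_mul_eq_mul_div, one_mul] at h
      have := (div_lt_iff₀ hn0).mp h
      linarith
  have hav : 0 < |a v| := by
    rcases (abs_nonneg (a v)).lt_or_eq with h | h
    · exact h
    · exfalso
      rw [hsplitv, ← h, add_zero, div_mul_eq_mul_div, one_mul] at hv_ge
      have := (le_div_iff₀ hn0).mp hv_ge
      linarith
  set t : ℝ := ((n : ℝ) * lam - B) / |a v| with ht
  have ht0 : 0 < t := div_pos (by linarith) hav
  have ht1 : t ≤ 1 := by
    rw [ht, div_le_one hav]
    rw [hsplitv, div_mul_eq_mul_div, one_mul] at hv_ge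
    have := (le_div_iff₀ hn0).mp hv_ge
    linarith
  have hnV : (n : ℝ) * V = ((v : ℝ) - 1) + t := by
    rw [hV, ht]
    field_simp
  have hai : ∀ i : ℕ, 1 ≤ i → i ≤ v → |a v| ≤ |a i| := fun i h1 h2 =>
    hord i v h1 h2 hvn
  have hIcc : ∀ m : ℕ, Icc 1 m = Ioc 0 m := fun m => Finset.Icc_add_one_left_eq_Ioc 0 m
  -- key lower bound for any feasible z
  have key : ∀ z : ℕ → ℝ, (∀ i ∈ Icc 1 n, |z i| ≤ 1) →
      lam ≤ (1 / (n : ℝ)) * ∑ i ∈ Icc 1 n, z i * a i →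
      (n : ℝ) * V ≤ ∑ i ∈ Icc 1 n, gstar a v i * z i := by
    intro z hz1 hz2
    have hsplitG : ∑ i ∈ Icc 1 n, gstar a v i * z i
        = (∑ i ∈ Icc 1 v, gstar a v i * z i) + ∑ i ∈ Ioc v n, gstar a v i * z i := by
      rw [hIcc n, hIcc v, Finset.sum_Ioc_consecutive _ (Nat.zero_le v) hvn]
    have hsplitZ : ∑ i ∈ Icc 1 n, z i * a i
        = (∑ i ∈ Icc 1 v, z i * a i) + ∑ i ∈ Ioc v n, z i * a i := by
      rw [hIcc n, hIcc v, Finset.sum_Ioc_consecutive _ (Nat.zero_le v) hvn]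
    have hG1 : ∑ i ∈ Icc 1 v, gstar a v i * z i
        = ∑ i ∈ Icc 1 v, Real.sign (a i) * z i := by
      apply Finset.sum_congr rfl
      intro i hi
      simp only [Finset.mem_Icc] at hi
      simp [gstar, hi.2]
    have hG2 : ∑ i ∈ Ioc v n, gstar a v i * z i
        = (∑ i ∈ Ioc v n, z i * a i) / |a v| := by
      rw [Finset.sum_div]
      apply Finset.sum_congr rfl
      intro i hi
      simp only [Finset.mem_Ioc] at hi
      have hnle : ¬ i ≤ v := by omega
      simp only [gstar, if_neg hnle]
      ring
    have hzS : (n : ℝ) * lam ≤ ∑ i ∈ Icc 1 n, z i * a i := by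
      rw [div_mul_eq_mul_div, one_mul] at hz2
      have := (le_div_iff₀ hn0).mp hz2
      linarith
    have hpt : ∑ i ∈ Icc 1 v, ((1 : ℝ) - |a i| / |a v|)
        ≤ ∑ i ∈ Icc 1 v, (Real.sign (a i) * z i - z i * a i / |a v|) := by
      apply Finset.sum_le_sum
      intro i hi
      simp only [Finset.mem_Icc] at hi
      exact pointwise' (a i) (z i) (|a v|) hav (hai i hi.1 hi.2)
        (hz1 i (Finset.mem_Icc.mpr ⟨hi.1, le_trans hi.2 hvn⟩))
    have hlhs : ∑ i ∈ Icc 1 v, ((1 : ℝ) - |a i| / |a v|)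
        = (v : ℝ) - (B + |a v|) / |a v| := by
      rw [Finset.sum_sub_distrib, Finset.sum_const, Nat.card_Icc, ← Finset.sum_div,
        hsplitv]
      have : v + 1 - 1 = v := by omega
      rw [this]
      simp [nsmul_eq_mul]
    have hrhs : ∑ i ∈ Icc 1 v, (Real.sign (a i) * z i - z i * a i / |a v|)
        = (∑ i ∈ Icc 1 v, Real.sign (a i) * z i)
          - (∑ i ∈ Icc 1 v, z i * a i) / |a v| := by
      rw [Finset.sum_sub_distrib, Finset.sum_div]
    rw [hlhs, hrhs] at hpt
    have h1 : ∑ i ∈ Icc 1 n, gstar a v i * z i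
        = (∑ i ∈ Icc 1 v, Real.sign (a i) * z i)
          + ((∑ i ∈ Icc 1 n, z i * a i) - ∑ i ∈ Icc 1 v, z i * a i) / |a v| := by
      rw [hsplitG, hG1, hG2]
      congr 1
      rw [hsplitZ]
      ring_nf
    rw [h1, hnV]
    have hm : ((n : ℝ) * lam - ∑ i ∈ Icc 1 v, z i * a i) / |a v|
        ≤ ((∑ i ∈ Icc 1 n, z i * a i) - ∑ i ∈ Icc 1 v, z i * a i) / |a v| :=
      (div_le_div_iff_of_pos_right hav).mpr (by linarith)
    have e1 : (B + |a v|) / |a v| = B / |a v| + 1 := by field_simp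
    have e2 : ((n : ℝ) * lam - ∑ i ∈ Icc 1 v, z i * a i) / |a v|
        = ((n : ℝ) * lam) / |a v| - (∑ i ∈ Icc 1 v, z i * a i) / |a v| := sub_div _ _ _
    have e3 : t = ((n : ℝ) * lam) / |a v| - B / |a v| := by rw [ht, sub_div]
    linarith
  -- the witness z*
  set zs : ℕ → ℝ := fun i =>
      if i < v then Real.sign (a i) else if i = v then Real.sign (a v) * t else 0
    with hzsdef
  have hzs1 : ∀ i ∈ Icc 1 n, |zs i| ≤ 1 := by
    intro i _
    by_cases h1 : i < v
    · simp only [hzsdef, if_pos h1]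
      exact abs_sign_le' _
    · by_cases h2 : i = v
      · simp only [hzsdef, if_neg h1, if_pos h2, abs_mul]
        calc |Real.sign (a v)| * |t| ≤ 1 * 1 :=
            mul_le_mul (abs_sign_le' _) (by rw [abs_of_pos ht0]; exact ht1)
              (abs_nonneg _) zero_le_one
        _ = 1 := one_mul 1
      · simp [hzsdef, h1, h2]
  have havne : a v ≠ 0 := by
    intro h; rw [h, abs_zero] at hav; exact lt_irrefl _ hav
  have haine : ∀ i : ℕ, 1 ≤ i → i ≤ v → a i ≠ 0 := by
    intro i h1 h2 h
    have := hai i h1 h2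
    rw [h, abs_zero] at this
    linarith
  have hIoczero : ∀ f : ℕ → ℝ, (∀ i ∈ Ioc v n, f i = 0) →
      ∑ i ∈ Ioc v n, f i = 0 := fun f hf => Finset.sum_eq_zero hf
  have hZsum : ∑ i ∈ Icc 1 n, zs i * a i = (n : ℝ) * lam := by
    have hsplit : ∑ i ∈ Icc 1 n, zs i * a i
        = (∑ i ∈ Icc 1 v, zs i * a i) + ∑ i ∈ Ioc v n, zs i * a i := by
      rw [hIcc n, hIcc v, Finset.sum_Ioc_consecutive _ (Nat.zero_le v) hvn]
    have h2 : ∑ i ∈ Ioc v n, zs i * a i = 0 := by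
      apply Finset.sum_eq_zero
      intro i hi
      simp only [Finset.mem_Ioc] at hi
      have h1 : ¬ i < v := by omega
      have h2 : i ≠ v := by omega
      simp [hzsdef, h1, h2]
    have h3 : ∑ i ∈ Icc 1 v, zs i * a i = B + t * |a v| := by
      conv_lhs => rw [hvsucc]
      rw [Finset.sum_Icc_succ_top (by omega), ← hvsucc]
      congr 1
      · rw [hB]
        apply Finset.sum_congr rfl
        intro i hi
        simp only [Finset.mem_Icc] at hi
        have hi2 : i < v := by omega
        simp only [hzsdef, if_pos hi2]
        exact sign_mul_self' _
      · have h1 : ¬ v < v := lt_irrefl v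
        have hz : zs v = Real.sign (a v) * t := by
          simp [hzsdef]
        rw [hz]
        linear_combination t * sign_mul_self' (a v)
    have h4 : t * |a v| = (n : ℝ) * lam - B := by
      rw [ht, div_mul_cancel₀ _ (ne_of_gt hav)]
    rw [hsplit, h2, h3, h4]
    ring
  have hGsum : ∑ i ∈ Icc 1 n, gstar a v i * zs i = ((v : ℝ) - 1) + t := by
    have hsplit : ∑ i ∈ Icc 1 n, gstar a v i * zs i
        = (∑ i ∈ Icc 1 v, gstar a v i * zs i) + ∑ i ∈ Ioc v n, gstar a v i * zs i := by
      rw [hIcc n, hIcc v, Finset.sum_Ioc_consecutive _ (Nat.zero_le v) hvn]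
    have h2 : ∑ i ∈ Ioc v n, gstar a v i * zs i = 0 := by
      apply Finset.sum_eq_zero
      intro i hi
      simp only [Finset.mem_Ioc] at hi
      have h1 : ¬ i < v := by omega
      have h2 : i ≠ v := by omega
      simp [hzsdef, h1, h2]
    have h3 : ∑ i ∈ Icc 1 v, gstar a v i * zs i = ((v : ℝ) - 1) + t := by
      conv_lhs => rw [hvsucc]
      rw [Finset.sum_Icc_succ_top (by omega), ← hvsucc]
      have hA : ∑ i ∈ Icc 1 (v - 1), gstar a v i * zs i = (v : ℝ) - 1 := by
        have : ∀ i ∈ Icc 1 (v - 1), gstar a v i * zs i = 1 := by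
          intro i hi
          simp only [Finset.mem_Icc] at hi
          have hi2 : i < v := by omega
          have hi3 : i ≤ v := by omega
          simp only [gstar, hzsdef, if_pos hi2, if_pos hi3]
          exact sign_sq' _ (haine i hi.1 hi3)
        rw [Finset.sum_congr rfl this, Finset.sum_const, Nat.card_Icc]
        have hcard : v - 1 + 1 - 1 = v - 1 := by omega
        rw [hcard, nsmul_eq_mul, mul_one]
        rw [Nat.cast_sub hv1, Nat.cast_one]
      have hB' : gstar a v v * zs v = t := by
        have h1 : ¬ v < v := lt_irrefl v
        have hz : zs v = Real.sign (a v) * t := by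
          simp [hzsdef]
        have hg : gstar a v v = Real.sign (a v) := by simp [gstar]
        rw [hz, hg]
        linear_combination t * sign_sq' (a v) havne
      rw [hA, hB']
    rw [hsplit, h2, h3]
    ring
  have hVeq : V = (((v : ℝ) - 1) + t) / n := by
    rw [eq_div_iff hnne]
    linarith [hnV]
  constructor
  · apply IsGreatest.csSup_eq
    constructor
    · -- membership
      refine ⟨zs, hzs1, ?_, ?_⟩
      · rw [hZsum]
        have he : (1:ℝ)/(n:ℝ) * ((n:ℝ)*lam) = lam := by field_simp
        rw [he]
      · rw [Labst_zero' n hn, hGsum, hVeq]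
        ring
    · -- upper bound
      rintro y ⟨z, h1, h2, rfl⟩
      rw [Labst_zero' n hn]
      have hk := key z h1 h2
      have hVle : V ≤ 1 / (n : ℝ) * ∑ i ∈ Icc 1 n, gstar a v i * z i := by
        rw [div_mul_eq_mul_div, one_mul, le_div_iff₀ hn0]
        linarith
      linarith
  · have hge : ((v : ℝ) - 1) / n ≤ V := by
      rw [div_le_iff₀ hn0]
      linarith [hnV]
    linarith
end
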